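/- arXiv:1402.6429 — 11 statements merged into one kernel-verified Lean document; each statement's English description precedes it below -/
import Mathlib

section
/- Let x₁, x₂, y₁, y₂, z₁, z₂ be complex numbers of modulus 1. Then (x₁·conj(y₁) + x₂·conj(y₂))·(y₁·conj(z₁) + y₂·conj(z₂))·(z₁·conj(x₁) + z₂·conj(x₂)) = |x₁·conj(y₁) + x₂·conj(y₂)|² + |y₁·conj(z₁) + y₂·conj(z₂)|² + |z₁·conj(x₁) + z₂·conj(x₂)|² - 4. In particular, the left-hand side is a real number. -/
theorem haagerup_identity (x₁ x₂ y₁ y₂ z₁ z₂ : ℂ)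
    (hx₁ : ‖x₁‖ = 1) (hx₂ : ‖x₂‖ = 1)
    (hy₁ : ‖y₁‖ = 1) (hy₂ : ‖y₂‖ = 1)
    (hz₁ : ‖z₁‖ = 1) (hz₂ : ‖z₂‖ = 1) :
    (x₁ * (starRingEnd ℂ) y₁ + x₂ * (starRingEnd ℂ) y₂) *
      (y₁ * (starRingEnd ℂ) z₁ + y₂ * (starRingEnd ℂ) z₂) *
      (z₁ * (starRingEnd ℂ) x₁ + z₂ * (starRingEnd ℂ) x₂) =
    ((‖x₁ * (starRingEnd ℂ) y₁ + x₂ * (starRingEnd ℂ) y₂‖ ^ 2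
      + ‖y₁ * (starRingEnd ℂ) z₁ + y₂ * (starRingEnd ℂ) z₂‖ ^ 2
      + ‖z₁ * (starRingEnd ℂ) x₁ + z₂ * (starRingEnd ℂ) x₂‖ ^ 2 - 4 : ℝ) : ℂ) := by
  have e : ∀ w : ℂ, ((‖w‖ : ℂ)) ^ 2 = w * (starRingEnd ℂ) w := by
    intro w
    norm_cast
    rw [Complex.sq_norm, Complex.mul_conj]
  have u : ∀ w : ℂ, ‖w‖ = 1 → w * (starRingEnd ℂ) w = 1 := by
    intro w hw
    rw [Complex.mul_conj, Complex.normSq_eq_norm_sq, hw]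
    norm_num
  have hX1 := u x₁ hx₁
  have hX2 := u x₂ hx₂
  have hY1 := u y₁ hy₁
  have hY2 := u y₂ hy₂
  have hZ1 := u z₁ hz₁
  have hZ2 := u z₂ hz₂
  push_cast
  rw [e, e, e]
  simp only [map_add, map_mul, Complex.conj_conj]
  linear_combination ((-1) * z₁*((starRingEnd ℂ) z₁) + y₂*z₁*((starRingEnd ℂ) y₁)*((starRingEnd ℂ) z₂) + (-1) * y₁*((starRingEnd ℂ) y₁) + y₁*z₁*((starRingEnd ℂ) y₁)*((starRingEnd ℂ) z₁)) * hX1 + ((-1) * z₂*((starRingEnd ℂ) z₂) + (-1) * y₂*((starRingEnd ℂ) y₂) + y₂*z₂*((starRingEnd ℂ) y₂)*((starRingEnd ℂ) z₂) + y₁*z₂*((starRingEnd ℂ) y₂)*((starRingEnd ℂ) z₁)) * hX2 + ((-1) * 1 + x₁*z₂*((starRingEnd ℂ) x₂)*((starRingEnd ℂ) z₁)) * hY1 + ((-1) * 1 + x₂*z₁*((starRingEnd ℂ) x₁)*((starRingEnd ℂ) z₂)) * hY2 + ((-1) * 1 + x₂*y₁*((starRingEnd ℂ) x₁)*((starRingEnd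 ℂ) y₂)) * hZ1 + ((-1) * 1 + x₁*y₂*((starRingEnd ℂ) x₂)*((starRingEnd ℂ) y₁)) * hZ2
end

section
/- Let x₁, x₂, y₁, y₂, z₁, z₂ be complex numbers of modulus 1. Then the product (x₁·conj(y₁) + x₂·conj(y₂))·(y₁·conj(z₁) + y₂·conj(z₂))·(z₁·conj(x₁) + z₂·conj(x₂)) is a real number (i.e., its imaginary part is zero). -/
theorem haagerup_real (x₁ x₂ y₁ y₂ z₁ z₂ : ℂ)
    (hx₁ : ‖x₁‖ = 1) (hx₂ : ‖x₂‖ = 1)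
    (hy₁ : ‖y₁‖ = 1) (hy₂ : ‖y₂‖ = 1)
    (hz₁ : ‖z₁‖ = 1) (hz₂ : ‖z₂‖ = 1) :
    ((x₁ * (starRingEnd ℂ) y₁ + x₂ * (starRingEnd ℂ) y₂) *
      (y₁ * (starRingEnd ℂ) z₁ + y₂ * (starRingEnd ℂ) z₂) *
      (z₁ * (starRingEnd ℂ) x₁ + z₂ * (starRingEnd ℂ) x₂)).im = 0 := by
  have nx₁ : x₁ ≠ 0 := by intro h; simp [h] at hx₁
  have nx₂ : x₂ ≠ 0 := by intro h; simp [h] at hx₂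
  have ny₁ : y₁ ≠ 0 := by intro h; simp [h] at hy₁
  have ny₂ : y₂ ≠ 0 := by intro h; simp [h] at hy₂
  have nz₁ : z₁ ≠ 0 := by intro h; simp [h] at hz₁
  have nz₂ : z₂ ≠ 0 := by intro h; simp [h] at hz₂
  rw [← Complex.conj_eq_iff_im]
  rw [← Complex.inv_eq_conj hx₁, ← Complex.inv_eq_conj hx₂,
      ← Complex.inv_eq_conj hy₁, ← Complex.inv_eq_conj hy₂,
      ← Complex.inv_eq_conj hz₁, ← Complex.inv_eq_conj hz₂]
  simp only [map_add, map_mul, map_inv₀,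
      ← Complex.inv_eq_conj hx₁, ← Complex.inv_eq_conj hx₂,
      ← Complex.inv_eq_conj hy₁, ← Complex.inv_eq_conj hy₂,
      ← Complex.inv_eq_conj hz₁, ← Complex.inv_eq_conj hz₂, inv_inv]
  field_simp
  ring
end

section
/- Let n > m ≥ 1 and let G be an n×n complex self-adjoint matrix satisfying m·G² = n·G with G having unit diagonal. Then the matrix G' = (n·I − m·G)/(n − m) is self-adjoint, has unit diagonal, and satisfies (n−m)·G'² = n·G'. -/
theorem naimark_complement_basic (n m : ℕ) (hm : 1 ≤ m) (hmn : m < n)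
    (G : Matrix (Fin n) (Fin n) ℂ) (hherm : G.IsHermitian)
    (hdiag : ∀ i, G i i = 1)
    (hframe : (m : ℂ) • (G * G) = (n : ℂ) • G) :
    ((((n : ℂ) - m)⁻¹ • ((n : ℂ) • (1 : Matrix (Fin n) (Fin n) ℂ) - (m : ℂ) • G)).IsHermitian)
    ∧ (∀ i, (((n : ℂ) - m)⁻¹ • ((n : ℂ) • (1 : Matrix (Fin n) (Fin n) ℂ) - (m : ℂ) • G)) i i = 1)
    ∧ ((n : ℂ) - m) • ((((n : ℂ) - m)⁻¹ • ((n : ℂ) • (1 : Matrix (Fin n) (Fin n) ℂ) - (m : ℂ) • G))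
        * (((n : ℂ) - m)⁻¹ • ((n : ℂ) • (1 : Matrix (Fin n) (Fin n) ℂ) - (m : ℂ) • G)))
      = (n : ℂ) • (((n : ℂ) - m)⁻¹ • ((n : ℂ) • (1 : Matrix (Fin n) (Fin n) ℂ) - (m : ℂ) • G)) := by
  have hmn' : (m : ℂ) ≠ (n : ℂ) := by exact_mod_cast Nat.ne_of_lt hmn
  have hne : (n : ℂ) - m ≠ 0 := sub_ne_zero.mpr (Ne.symm hmn')
  set A : Matrix (Fin n) (Fin n) ℂ := (n : ℂ) • (1 : Matrix (Fin n) (Fin n) ℂ) - (m : ℂ) • G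
    with hA
  have hAA : A * A = ((n:ℂ)*n) • (1 : Matrix (Fin n) (Fin n) ℂ) - ((n:ℂ)*m) • G := by
    rw [hA, Matrix.sub_mul, Matrix.mul_sub, Matrix.mul_sub]
    simp only [Matrix.smul_mul, Matrix.mul_smul, Matrix.one_mul, Matrix.mul_one,
      smul_smul]
    rw [mul_comm (m:ℂ) (n:ℂ), mul_comm (m:ℂ) (m:ℂ), ← smul_smul (m:ℂ) (m:ℂ),
      hframe, smul_smul, mul_comm (m:ℂ) (n:ℂ)]
    abel
  refine ⟨?_, ?_, ?_⟩
  · unfold Matrix.IsHermitian at *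
    rw [Matrix.conjTranspose_smul, hA, Matrix.conjTranspose_sub, Matrix.conjTranspose_smul,
      Matrix.conjTranspose_smul, Matrix.conjTranspose_one, hherm]
    simp
  · intro i
    simp [hA, Matrix.smul_apply, Matrix.sub_apply, Matrix.one_apply, hdiag i]
    field_simp
  · rw [Matrix.smul_mul, Matrix.mul_smul, hAA, smul_smul, smul_smul, smul_smul, hA]
    rw [smul_sub, smul_sub, smul_smul, smul_smul, smul_smul, smul_smul]
    congr 1 <;> congr 1 <;> field_simp <;> ring
end

section
/- Let n > m ≥ 1 and let G be an n×n complex self-adjoint matrix with unit diagonal, all off-diagonal entries of modulus α = √((n−m)/(m(n−1))), and satisfying m·G² = n·G. Then the matrix G' = (n·I − m·G)/(n − m) is self-adjoint, has unit diagonal, all off-diagonal entries of G' have modulus √(m/((n−m)(n−1))), and satisfies (n−m)·G'² = n·G'. -/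
theorem naimark_complement_etf (n m : ℕ) (hm : 1 ≤ m) (hmn : m < n)
    (G : Matrix (Fin n) (Fin n) ℂ) (hherm : G.IsHermitian)
    (hdiag : ∀ i, G i i = 1)
    (hmod : ∀ i j, i ≠ j →
      ‖G i j‖ = Real.sqrt ((n - m) / (m * (n - 1))))
    (hframe : (m : ℂ) • (G * G) = (n : ℂ) • G) :
    ∀ G' : Matrix (Fin n) (Fin n) ℂ,
      G' = ((n : ℂ) - m)⁻¹ • ((n : ℂ) • (1 : Matrix (Fin n) (Fin n) ℂ) - (m : ℂ) • G) →
      G'.IsHermitian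
      ∧ (∀ i, G' i i = 1)
      ∧ (∀ i j, i ≠ j →
          ‖G' i j‖ = Real.sqrt (m / ((n - m) * (n - 1))))
      ∧ ((n : ℂ) - m) • (G' * G') = (n : ℂ) • G' := by
  intro G' hG'
  have hnm : (n : ℂ) - m ≠ 0 := by
    have : (m : ℂ) ≠ (n : ℂ) := by exact_mod_cast hmn.ne
    intro h
    exact this (by linear_combination -h)
  subst hG'
  refine ⟨?_, ?_, ?_, ?_⟩
  · unfold Matrix.IsHermitian
    simp only [Matrix.conjTranspose_smul, Matrix.conjTranspose_sub,
      Matrix.conjTranspose_one, hherm.eq]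
    congr 1 <;> simp
  · intro i
    simp only [Matrix.smul_apply, Matrix.sub_apply, Matrix.one_apply_eq, hdiag,
      smul_eq_mul]
    field_simp
  · intro i j hij
    have h1 : ((n : ℂ) • (1 : Matrix (Fin n) (Fin n) ℂ) - (m : ℂ) • G) i j
        = -((m : ℂ) * G i j) := by
      simp [Matrix.one_apply_ne hij]
    simp only [Matrix.smul_apply, h1, smul_eq_mul, norm_mul, norm_neg,
      norm_inv]
    rw [hmod i j hij]
    have habs1 : ‖((n : ℂ) - m)‖ = (n : ℝ) - m := by
      rw [show ((n : ℂ) - m) = (((n : ℝ) - m : ℝ) : ℂ) by push_cast; ring,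
        Complex.norm_real, Real.norm_eq_abs, abs_of_pos]
      have : (m : ℝ) < n := by exact_mod_cast hmn
      linarith
    rw [habs1, Complex.norm_natCast]
    have hn1 : (1 : ℝ) ≤ n := by exact_mod_cast hm.trans hmn.le
    have hm0 : (0 : ℝ) < m := by exact_mod_cast hm
    have hnm0 : (0 : ℝ) < (n : ℝ) - m := by
      have : (m : ℝ) < n := by exact_mod_cast hmn
      linarith
    have hn11 : (0 : ℝ) < (n : ℝ) - 1 := by
      have : (m : ℝ) ≥ 1 := by exact_mod_cast hm
      linarith
    rw [← mul_assoc]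
    rw [show ((n : ℝ) - m)⁻¹ * m = Real.sqrt ((((n:ℝ) - m)⁻¹ * m)^2) by
      rw [Real.sqrt_sq (by positivity)]]
    rw [← Real.sqrt_mul (by positivity)]
    congr 1
    field_simp
  · have key : ((n : ℂ) • (1 : Matrix (Fin n) (Fin n) ℂ) - (m : ℂ) • G) *
        ((n : ℂ) • (1 : Matrix (Fin n) (Fin n) ℂ) - (m : ℂ) • G)
        = (n : ℂ) • ((n : ℂ) • (1 : Matrix (Fin n) (Fin n) ℂ) - (m : ℂ) • G) := by
      simp only [Matrix.mul_sub, Matrix.sub_mul, Matrix.smul_mul, Matrix.mul_smul,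
        Matrix.one_mul, Matrix.mul_one, smul_smul, hframe]
      simp
    rw [Matrix.smul_mul, Matrix.mul_smul, smul_smul, smul_smul, key, smul_smul,
      smul_smul]
    congr 1
    field_simp
end

section
/- Let n ≥ m ≥ 1, let H be an (n−1)×(n−1) complex self-adjoint matrix with unit diagonal and off-diagonal entries of modulus α = √((n−m)/(m(n−1))), and let v be a column vector in ℂ^(n−1) all of whose entries have modulus α. If n·H − m·H² = m·v·v*, then the n×n block matrix G = [[H, v],[v*, 1]] is self-adjoint, has unit diagonal, all off-diagonal entries of modulus α, and satisfies m·G² = n·G. -/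
set_option maxHeartbeats 1000000

lemma etf_dot_eq (n m : ℕ) (hm : 1 ≤ m) (hmn : m ≤ n) (v : Fin (n - 1) → ℂ)
    (hv : ∀ i, ‖v i‖ = Real.sqrt (((n:ℝ) - m) / (m * ((n:ℝ) - 1)))) :
    dotProduct (star v) v = ((n:ℂ) - m) / m := by
  have hm0 : (m : ℝ) ≠ 0 := Nat.cast_ne_zero.mpr (by omega)
  set rr : ℝ := ((n:ℝ) - m) / (m * ((n:ℝ) - 1)) with hrr
  have hrr0 : 0 ≤ rr := by
    apply div_nonneg
    · have : (m:ℝ) ≤ n := by exact_mod_cast hmn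
      linarith
    · have : (1:ℝ) ≤ n := by exact_mod_cast (hm.trans hmn)
      have : (m:ℝ) ≥ 0 := by positivity
      nlinarith [this]
  have hterm : ∀ i, star (v i) * v i = (rr : ℂ) := by
    intro i
    have h2 : Complex.normSq (v i) = rr := by
      rw [← Complex.sq_norm, hv i, Real.sq_sqrt hrr0]
    rw [mul_comm, Complex.star_def, Complex.mul_conj, h2]
  have hsum : dotProduct (star v) v = ((n - 1 : ℕ) : ℂ) * (rr : ℂ) := by
    have : ∀ i : Fin (n-1), (star v) i * v i = (rr:ℂ) := fun i => hterm i
    rw [dotProduct, Finset.sum_congr rfl (fun i _ => this i), Finset.sum_const]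
    simp [mul_comm]
  rw [hsum]
  rcases Nat.lt_or_ge n 2 with h2 | h2
  · have hn1 : n = 1 := by omega
    have hm1 : m = 1 := by omega
    subst hn1; subst hm1
    norm_num
  · have hn1 : ((n:ℝ) - 1) ≠ 0 := by
      have : (2:ℝ) ≤ n := by exact_mod_cast h2
      linarith
    have hcast : ((n - 1 : ℕ) : ℝ) = (n:ℝ) - 1 := by
      push_cast [Nat.cast_sub (by omega : 1 ≤ n)]; ring
    have : ((n - 1 : ℕ) : ℝ) * rr = ((n:ℝ) - m) / m := by
      rw [hcast, hrr]
      field_simp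
    calc ((n - 1 : ℕ) : ℂ) * (rr : ℂ) = ((((n - 1 : ℕ) : ℝ) * rr : ℝ) : ℂ) := by push_cast; ring
    _ = ((((n:ℝ) - m) / m : ℝ) : ℂ) := by rw [this]
    _ = ((n:ℂ) - m) / m := by push_cast; ring

open Matrix in
lemma trace_idem {d : ℕ} (E : Matrix (Fin d) (Fin d) ℂ) (h : E * E = E) :
    ∃ k : ℕ, E.trace = (k : ℂ) := by
  have hf : (Matrix.toLin' E) ∘ₗ (Matrix.toLin' E) = Matrix.toLin' E := by
    rw [← Matrix.toLin'_mul, h]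
  obtain ⟨p, hp⟩ := (LinearMap.isProj_iff_isIdempotentElem _).mpr hf
  refine ⟨Module.finrank ℂ p, ?_⟩
  have ht := hp.trace
  rw [LinearMap.trace_eq_matrix_trace ℂ (Pi.basisFun ℂ (Fin d))] at ht
  rw [← ht]
  congr 1
  simp [LinearMap.toMatrix_eq_toMatrix']

lemma etf_key (n m : ℕ) (hm : 1 ≤ m) (hmn : m ≤ n)
    (H : Matrix (Fin (n - 1)) (Fin (n - 1)) ℂ) (v : Fin (n - 1) → ℂ)
    (hherm : H.IsHermitian) (hdiag : ∀ i, H i i = 1)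
    (hv : ∀ i, ‖v i‖ = Real.sqrt (((n:ℝ) - m) / (m * ((n:ℝ) - 1))))
    (hdot : dotProduct (star v) v = ((n:ℂ) - m) / m)
    (heq : (n : ℂ) • H - (m : ℂ) • (H * H) = (m : ℂ) • Matrix.vecMulVec v (star v)) :
    H.mulVec v = (((n:ℂ) - m) / m) • v := by
  classical
  by_cases hv0 : v = 0
  · subst hv0; simp
  -- nontrivial case
  obtain ⟨i0, hi0⟩ := Function.ne_iff.mp hv0
  have hrrpos : 0 < ((n:ℝ) - m) / (m * ((n:ℝ) - 1)) := by
    have h1 : 0 < ‖v i0‖ := by simpa using hi0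
    rw [hv i0] at h1
    exact Real.sqrt_pos.mp h1
  have hmltn : m < n := by
    by_contra h
    have hnm : n = m := by omega
    rw [hnm] at hrrpos
    simp at hrrpos
  have hn2 : 2 ≤ n := by
    by_contra h
    have hn1 : n = 1 := by omega
    have hm1 : m = 1 := by omega
    rw [hn1, hm1] at hrrpos
    norm_num at hrrpos
  have hm0 : (m:ℂ) ≠ 0 := Nat.cast_ne_zero.mpr (by omega)
  have hn0 : (n:ℂ) ≠ 0 := Nat.cast_ne_zero.mpr (by omega)
  have hnm0 : (n:ℂ) - m ≠ 0 :=
    sub_ne_zero.mpr (by exact_mod_cast (by omega : n ≠ m))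
  set s : ℂ := ((n:ℂ) - m) / m with hs_def
  have hs0 : s ≠ 0 := div_ne_zero hnm0 hm0
  set P : Matrix (Fin (n-1)) (Fin (n-1)) ℂ := Matrix.vecMulVec v (star v) with hP_def
  have hPmul : ∀ x : Fin (n-1) → ℂ, P.mulVec x = (dotProduct (star v) x) • v := by
    intro x
    ext i
    simp only [Matrix.mulVec, dotProduct, Matrix.vecMulVec_apply, Pi.smul_apply,
      smul_eq_mul, Finset.sum_mul, hP_def]
    exact Finset.sum_congr rfl fun k _ => by ring
  have hcommM : H * ((m:ℂ) • P) = ((m:ℂ) • P) * H := by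
    rw [← heq]
    simp only [Matrix.mul_sub, Matrix.sub_mul, mul_smul_comm, smul_mul_assoc,
      ← Matrix.mul_assoc]
  have hcomm : H * P = P * H := by
    have h1 : (m:ℂ) • (H * P) = (m:ℂ) • (P * H) := by
      rw [← mul_smul_comm, ← smul_mul_assoc, hcommM]
    exact smul_right_injective _ hm0 h1
  have h5 : H.mulVec (P.mulVec v) = P.mulVec (H.mulVec v) := by
    rw [Matrix.mulVec_mulVec, Matrix.mulVec_mulVec, hcomm]
  rw [hPmul, hPmul, hdot, Matrix.mulVec_smul] at h5
  set t : ℂ := dotProduct (star v) (H.mulVec v) with ht_def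
  set c : ℂ := t / s with hc_def
  have hHv : H.mulVec v = c • v := by
    calc H.mulVec v = s⁻¹ • (s • H.mulVec v) := by
          rw [smul_smul, inv_mul_cancel₀ hs0, one_smul]
    _ = s⁻¹ • (t • v) := by rw [h5]
    _ = c • v := by rw [smul_smul, hc_def, div_eq_inv_mul]
  -- plug into heq
  have h6 := congrArg (fun M : Matrix (Fin (n-1)) (Fin (n-1)) ℂ => M.mulVec v) heq
  simp only [Matrix.sub_mulVec, Matrix.smul_mulVec] at h6
  rw [hPmul, hdot, ← Matrix.mulVec_mulVec, hHv, Matrix.mulVec_smul, hHv] at h6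
  have h7 : ((n:ℂ) * c - (m:ℂ) * (c * c) - m * s) * v i0 = 0 := by
    have := congrFun h6 i0
    simp only [Pi.sub_apply, Pi.smul_apply, smul_eq_mul] at this
    ring_nf
    ring_nf at this
    linear_combination this
  have h8 : (n:ℂ) * c - (m:ℂ) * (c * c) - m * s = 0 := by
    rcases mul_eq_zero.mp h7 with h | h
    · exact h
    · exact absurd h hi0
  have hms : (m:ℂ) * s = (n:ℂ) - m := by
    rw [hs_def]; field_simp
  have hfact : (c - 1) * ((m:ℂ) * c - ((n:ℂ) - m)) = 0 := by
    linear_combination -h8 - hms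
  rcases mul_eq_zero.mp hfact with hc1 | hc2
  · -- c = 1 : show n = 2m
    have hc1' : c = 1 := by linear_combination hc1
    have hHv1 : H.mulVec v = v := by rw [hHv, hc1', one_smul]
    have hsum1 : ∀ i, ∑ k, H i k * v k = v i := by
      intro i
      have h7 := congrFun hHv1 i
      simpa [Matrix.mulVec, dotProduct] using h7
    have hPherm : P.conjTranspose = P := by
      ext i j
      simp only [Matrix.conjTranspose_apply, hP_def, Matrix.vecMulVec_apply, Pi.star_apply,
        star_mul', star_star]
      ring
    have hHP : H * P = P := by
      ext i j
      simp only [Matrix.mul_apply, hP_def, Matrix.vecMulVec_apply, Pi.star_apply]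
      calc ∑ k, H i k * (v k * star (v j))
          = (∑ k, H i k * v k) * star (v j) := by
            rw [Finset.sum_mul]; exact Finset.sum_congr rfl fun k _ => by ring
        _ = v i * star (v j) := by rw [hsum1 i]
    have hPH : P * H = P := by
      have e1 : P * H = (H.conjTranspose * P.conjTranspose).conjTranspose := by
        rw [Matrix.conjTranspose_mul, Matrix.conjTranspose_conjTranspose,
          Matrix.conjTranspose_conjTranspose]
      rw [e1, hherm.eq, hPherm, hHP, hPherm]
    have hdots : ∑ k, star (v k) * v k = s := by
      have := hdot
      simpa [dotProduct, Pi.star_apply] using this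
    have hPP : P * P = s • P := by
      ext i j
      simp only [Matrix.mul_apply, hP_def, Matrix.vecMulVec_apply, Matrix.smul_apply,
        Pi.star_apply, smul_eq_mul]
      calc ∑ k, v i * star (v k) * (v k * star (v j))
          = (∑ k, star (v k) * v k) * (v i * star (v j)) := by
            rw [Finset.sum_mul]; exact Finset.sum_congr rfl fun k _ => by ring
        _ = s * (v i * star (v j)) := by rw [hdots]
    have hH2 : H * H = ((n:ℂ)/m) • H - P := by
      have h9 : (m:ℂ) • (H * H) = (m:ℂ) • (((n:ℂ)/m) • H - P) := by
        rw [smul_sub, smul_smul]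
        rw [mul_div_cancel₀ _ hm0]
        rw [eq_sub_iff_add_eq, add_comm, ← eq_sub_iff_add_eq]
        exact heq.symm
      exact smul_right_injective _ hm0 h9
    set F : Matrix (Fin (n-1)) (Fin (n-1)) ℂ := ((n:ℂ) - m) • H - (m:ℂ) • P with hF_def
    have hmF2 : (m:ℂ) • (F * F) = ((n:ℂ) * ((n:ℂ) - m)) • F := by
      rw [hF_def]
      simp only [Matrix.sub_mul, Matrix.mul_sub, smul_mul_assoc, mul_smul_comm,
        hHP, hPH, hPP, hH2, smul_smul, smul_sub, hs_def]
      match_scalars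
      · field_simp
      · field_simp
        ring
    have hF2 : F * F = ((n:ℂ) * ((n:ℂ) - m) / m) • F := by
      apply smul_right_injective (Matrix (Fin (n-1)) (Fin (n-1)) ℂ) hm0
      show (m:ℂ) • (F * F) = (m:ℂ) • (((n:ℂ) * ((n:ℂ) - m) / m) • F)
      rw [hmF2, smul_smul, mul_div_cancel₀ _ hm0]
    set E : Matrix (Fin (n-1)) (Fin (n-1)) ℂ := ((m:ℂ)/((n:ℂ)*((n:ℂ)-m))) • F with hE_def
    have hE : E * E = E := by
      rw [hE_def, smul_mul_assoc, mul_smul_comm, hF2, smul_smul, smul_smul]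
      congr 1
      field_simp
    have htrH : Matrix.trace H = (n:ℂ) - 1 := by
      have : Matrix.trace H = ((n - 1 : ℕ) : ℂ) := by
        simp [Matrix.trace, Matrix.diag, hdiag]
      rw [this]
      push_cast [Nat.cast_sub (by omega : 1 ≤ n)]
      ring
    have htrP : Matrix.trace P = s := by
      rw [← hdots]
      simp only [Matrix.trace, Matrix.diag, hP_def, Matrix.vecMulVec_apply, Pi.star_apply]
      exact Finset.sum_congr rfl fun k _ => mul_comm _ _
    have htrF : Matrix.trace F = ((n:ℂ) - m) * ((n:ℂ) - 1) - m * s := by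
      rw [hF_def, Matrix.trace_sub, Matrix.trace_smul, Matrix.trace_smul, htrH, htrP,
        smul_eq_mul, smul_eq_mul]
    obtain ⟨k, hk⟩ := trace_idem E hE
    have htrE2 : Matrix.trace E = m * ((n:ℂ) - 2) / n := by
      rw [hE_def, Matrix.trace_smul, htrF, smul_eq_mul, hs_def]
      field_simp
      ring
    have h10 : m * ((n:ℂ) - 2) / n = (k:ℂ) := htrE2.symm.trans hk
    have hkeq2 : (m:ℂ) * ((n:ℂ) - 2) = (k:ℂ) * n := (div_eq_iff hn0).mp h10
    have hZ : (k:ℤ) * n = m * ((n:ℤ) - 2) := by exact_mod_cast hkeq2.symm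
    have hmZ : (1:ℤ) ≤ m := by exact_mod_cast hm
    have hmnZ : (m:ℤ) < n := by exact_mod_cast hmltn
    have hn2Z : (2:ℤ) ≤ n := by exact_mod_cast hn2
    have hklt : (k:ℤ) < m := by
      by_contra hh
      push_neg at hh
      nlinarith [mul_le_mul_of_nonneg_right hh (by linarith : (0:ℤ) ≤ n)]
    have h2m : 2*(m:ℤ) = ((m:ℤ) - k) * n := by linear_combination hZ
    have hmk1 : (m:ℤ) - k = 1 := by
      have hge : 1 ≤ (m:ℤ) - k := by linarith
      by_contra hh
      have hge2 : 2 ≤ (m:ℤ) - k := by omega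
      nlinarith [mul_le_mul_of_nonneg_right hge2 (by linarith : (0:ℤ) ≤ n)]
    have hn2m : (n:ℤ) = 2 * m := by
      rw [hmk1, one_mul] at h2m
      linarith
    have hs1 : s = 1 := by
      have hnC : (n:ℂ) = 2 * m := by exact_mod_cast hn2m
      rw [hs_def, hnC]
      field_simp
      ring
    rw [hHv, hc1', hs1]
  · have hcs : c = s := by
      rw [hs_def]
      field_simp
      linear_combination hc2
    rw [hHv, hcs]

theorem etf_completion (n m : ℕ) (hm : 1 ≤ m) (hmn : m ≤ n)
    (H : Matrix (Fin (n - 1)) (Fin (n - 1)) ℂ) (v : Fin (n - 1) → ℂ)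
    (hherm : H.IsHermitian) (hdiag : ∀ i, H i i = 1)
    (hmod : ∀ i j, i ≠ j →
      ‖H i j‖ = Real.sqrt ((n - m) / (m * (n - 1))))
    (hv : ∀ i, ‖v i‖ = Real.sqrt ((n - m) / (m * (n - 1))))
    (heq : (n : ℂ) • H - (m : ℂ) • (H * H) = (m : ℂ) • Matrix.vecMulVec v (star v)) :
    ∀ G : Matrix (Fin (n - 1) ⊕ Fin 1) (Fin (n - 1) ⊕ Fin 1) ℂ,
      G = Matrix.fromBlocks H (Matrix.replicateCol (Fin 1) v) (Matrix.replicateRow (Fin 1) (star v)) 1 →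
      G.IsHermitian
      ∧ (∀ i, G i i = 1)
      ∧ (∀ i j, i ≠ j →
          ‖G i j‖ = Real.sqrt ((n - m) / (m * (n - 1))))
      ∧ (m : ℂ) • (G * G) = (n : ℂ) • G := by
  intro G hG
  subst hG
  have hdot := etf_dot_eq n m hm hmn v hv
  have hkey := etf_key n m hm hmn H v hherm hdiag hv hdot heq
  have hm0 : (m:ℂ) ≠ 0 := Nat.cast_ne_zero.mpr (by omega)
  set s : ℂ := ((n:ℂ) - m) / m with hs_def
  have hms : (m:ℂ) * s = (n:ℂ) - m := by rw [hs_def]; field_simp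
  have hkey' : ∀ i, (∑ k, H i k * v k) = s * v i := by
    intro i
    have h1 := congrFun hkey i
    simpa [Matrix.mulVec, dotProduct] using h1
  have hdots : (∑ k, star (v k) * v k) = s := by
    simpa [dotProduct] using hdot
  have hsym : ∀ a b, star (H a b) = H b a := by
    intro a b
    conv_rhs => rw [← hherm.eq]
    simp [Matrix.conjTranspose_apply]
  have hstars : star s = s := by
    rw [hs_def]
    simp [star_div₀, star_sub]
  have hkey'' : ∀ j, (∑ k, star (v k) * H k j) = s * star (v j) := by
    intro j
    have h1 : (∑ k, star (v k) * H k j) = star (∑ k, H j k * v k) := by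
      rw [star_sum]
      exact Finset.sum_congr rfl fun k _ => by rw [star_mul', hsym]; exact mul_comm _ _
    rw [h1, hkey' j, star_mul', hstars]
  refine ⟨?_, ?_, ?_, ?_⟩
  · -- Hermitian
    rw [Matrix.IsHermitian, Matrix.fromBlocks_conjTranspose, Matrix.conjTranspose_replicateCol,
      Matrix.conjTranspose_replicateRow, hherm.eq, star_star, Matrix.conjTranspose_one]
  · -- diagonal
    rintro (i | i)
    · simpa [Matrix.fromBlocks] using hdiag i
    · simp [Matrix.fromBlocks]
  · -- off-diagonal moduli
    rintro (i | i) (j | j) hij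
    · exact hmod i j (fun h => hij (by rw [h]))
    · simpa [Matrix.fromBlocks] using hv i
    · simpa [Matrix.fromBlocks] using hv j
    · exact absurd (congrArg Sum.inr (Subsingleton.elim i j)) hij
  · -- the frame equation
    ext (i | i) (j | j)
    · have h1 := congrFun (congrFun heq i) j
      simp only [Matrix.sub_apply, Matrix.smul_apply, Matrix.mul_apply,
        Matrix.vecMulVec_apply, smul_eq_mul, Pi.star_apply] at h1
      simp only [Matrix.smul_apply, Matrix.mul_apply, Matrix.fromBlocks_apply₁₁,
        Matrix.fromBlocks_apply₁₂, Matrix.fromBlocks_apply₂₁, Fintype.sum_sum_type,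
        Matrix.replicateCol_apply, Matrix.replicateRow_apply, Pi.star_apply, smul_eq_mul,
        Finset.univ_unique, Finset.sum_singleton]
      linear_combination -h1
    · simp only [Matrix.smul_apply, Matrix.mul_apply, Matrix.fromBlocks_apply₁₁,
        Matrix.fromBlocks_apply₁₂, Matrix.fromBlocks_apply₂₂, Fintype.sum_sum_type,
        Matrix.replicateCol_apply, Matrix.replicateRow_apply, Matrix.one_apply, smul_eq_mul,
        eq_iff_true_of_subsingleton, if_true,
        Finset.univ_unique, Finset.sum_singleton]
      rw [hkey' i]
      linear_combination (v i) * hms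
    · simp only [Matrix.smul_apply, Matrix.mul_apply, Matrix.fromBlocks_apply₂₁,
        Matrix.fromBlocks_apply₁₁, Matrix.fromBlocks_apply₂₂, Fintype.sum_sum_type,
        Matrix.replicateCol_apply, Matrix.replicateRow_apply, Pi.star_apply, Matrix.one_apply, smul_eq_mul,
        eq_iff_true_of_subsingleton, if_true,
        Finset.univ_unique, Finset.sum_singleton]
      rw [hkey'' j]
      linear_combination (star (v j)) * hms
    · simp only [Matrix.smul_apply, Matrix.mul_apply, Matrix.fromBlocks_apply₂₁,
        Matrix.fromBlocks_apply₁₂, Matrix.fromBlocks_apply₂₂, Fintype.sum_sum_type,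
        Matrix.replicateCol_apply, Matrix.replicateRow_apply, Pi.star_apply, Matrix.one_apply, smul_eq_mul,
        eq_iff_true_of_subsingleton, if_true,
        Finset.univ_unique, Finset.sum_singleton]
      rw [hdots]
      linear_combination hms
end

section
/- Let n ≥ 5, m ≥ 1, α = √((n−m)/(m(n−1))), and let G = (g_{i,j}) be an n×n complex self-adjoint matrix with unit diagonal, off-diagonal entries of modulus α, satisfying m·G² = n·G. Fix indices 1 ≤ i < j < k ≤ n−2 (or more generally any three distinct indices among the first n−2), and set Σ = (n/m)·g_{i,j} − Σ_{ℓ=1}^{n−2} g_{i,ℓ}·conj(g_{j,ℓ}), Δ = (n/m)·g_{j,k} − Σ_{ℓ=1}^{n−2} g_{j,ℓ}·conj(g_{k,ℓ}), Ψ = (n/m)·g_{k,i} − Σ_{ℓ=1}^{n−2} g_{k,ℓ}·conj(g_{i,ℓ}). Then Σ·Δ·Ψ − α²·(|Σ|² + |Δ|² + |Ψ|² − 4α⁴) = 0. -/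
private lemma sum_split_aux {n : ℕ} (hn : 5 ≤ n) (f : Fin n → ℂ) :
    ∑ l, f l = (∑ l : Fin (n-2), f (Fin.castLE (by omega) l))
      + f ⟨n-2, by omega⟩ + f ⟨n-1, by omega⟩ := by
  have h : n - 2 + 1 + 1 = n := by omega
  rw [← Fin.sum_congr' f h, Fin.sum_univ_castSucc, Fin.sum_univ_castSucc]
  have e2 : Fin.cast h (Fin.last (n - 2 + 1)) = (⟨n - 1, by omega⟩ : Fin n) := by
    ext; simp; omega
  have e3 : Fin.cast h (Fin.last (n - 2)).castSucc = (⟨n - 2, by omega⟩ : Fin n) := by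
    ext; simp
  have e4 : ∀ x : Fin (n - 2),
      Fin.cast h x.castSucc.castSucc = Fin.castLE (by omega : n - 2 ≤ n) x := fun x => by
    ext; simp
  rw [e2, e3]
  simp only [e4]

theorem etf_haagerup_condition (n m : ℕ) (hn : 5 ≤ n) (hm : 1 ≤ m)
    (G : Matrix (Fin n) (Fin n) ℂ) (hherm : G.IsHermitian)
    (hdiag : ∀ i, G i i = 1)
    (hmod : ∀ i j, i ≠ j →
      ‖G i j‖ = Real.sqrt ((n - m) / (m * (n - 1))))
    (hframe : (m : ℂ) • (G * G) = (n : ℂ) • G)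
    (i j k : Fin (n - 2)) (hij : i ≠ j) (hjk : j ≠ k) (hik : i ≠ k) :
    ∀ S Δ Ψ : ℂ,
      S = ((n : ℂ) / m) * G (Fin.castLE (by omega) i) (Fin.castLE (by omega) j)
        - ∑ l : Fin (n - 2), G (Fin.castLE (by omega) i) (Fin.castLE (by omega) l)
            * (starRingEnd ℂ) (G (Fin.castLE (by omega) j) (Fin.castLE (by omega) l)) →
      Δ = ((n : ℂ) / m) * G (Fin.castLE (by omega) j) (Fin.castLE (by omega) k)
        - ∑ l : Fin (n - 2), G (Fin.castLE (by omega) j) (Fin.castLE (by omega) l)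
            * (starRingEnd ℂ) (G (Fin.castLE (by omega) k) (Fin.castLE (by omega) l)) →
      Ψ = ((n : ℂ) / m) * G (Fin.castLE (by omega) k) (Fin.castLE (by omega) i)
        - ∑ l : Fin (n - 2), G (Fin.castLE (by omega) k) (Fin.castLE (by omega) l)
            * (starRingEnd ℂ) (G (Fin.castLE (by omega) i) (Fin.castLE (by omega) l)) →
      S * Δ * Ψ
        - ((Real.sqrt ((n - m) / (m * (n - 1))) ^ 2 : ℝ) : ℂ)
          * (((‖S‖ ^ 2 + ‖Δ‖ ^ 2 + ‖Ψ‖ ^ 2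
              - 4 * Real.sqrt ((n - m) / (m * (n - 1))) ^ 4 : ℝ)) : ℂ) = 0 := by
  intro S Δ Ψ hS hΔ hΨ
  have hle : n - 2 ≤ n := by omega
  set α : ℝ := Real.sqrt ((n - m) / (m * (n - 1))) with hα
  set i' : Fin n := Fin.castLE hle i with hi'
  set j' : Fin n := Fin.castLE hle j with hj'
  set k' : Fin n := Fin.castLE hle k with hk'
  set p1 : Fin n := ⟨n-2, by omega⟩ with hp1
  set p2 : Fin n := ⟨n-1, by omega⟩ with hp2
  -- entry-wise frame condition
  have hm' : (m : ℂ) ≠ 0 := Nat.cast_ne_zero.mpr (by omega)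
  have key : ∀ p q : Fin n, ((n:ℂ)/m) * G p q
      = ∑ l : Fin n, G p l * (starRingEnd ℂ) (G q l) := by
    intro p q
    have h := congrFun (congrFun hframe p) q
    simp only [Matrix.smul_apply, Matrix.mul_apply, smul_eq_mul] at h
    have hc : ∀ l, (starRingEnd ℂ) (G q l) = G l q := fun l => hherm.apply l q
    have hsum : ∑ l : Fin n, G p l * (starRingEnd ℂ) (G q l) = ∑ l : Fin n, G p l * G l q :=
      Finset.sum_congr rfl fun l _ => by rw [hc l]
    rw [hsum, div_mul_eq_mul_div, div_eq_iff hm']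
    linear_combination -h
  -- express S, Δ, Ψ via the last two columns
  have split : ∀ p q : Fin n,
      ((n:ℂ)/m) * G p q
        - ∑ l : Fin (n-2), G p (Fin.castLE hle l) * (starRingEnd ℂ) (G q (Fin.castLE hle l))
      = G p p1 * (starRingEnd ℂ) (G q p1) + G p p2 * (starRingEnd ℂ) (G q p2) := by
    intro p q
    rw [key p q, sum_split_aux hn (fun l => G p l * (starRingEnd ℂ) (G q l))]
    ring_nf
    rfl
  have hS2 : S = G i' p1 * (starRingEnd ℂ) (G j' p1) + G i' p2 * (starRingEnd ℂ) (G j' p2) := by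
    rw [hS]; exact split i' j'
  have hΔ2 : Δ = G j' p1 * (starRingEnd ℂ) (G k' p1) + G j' p2 * (starRingEnd ℂ) (G k' p2) := by
    rw [hΔ]; exact split j' k'
  have hΨ2 : Ψ = G k' p1 * (starRingEnd ℂ) (G i' p1) + G k' p2 * (starRingEnd ℂ) (G i' p2) := by
    rw [hΨ]; exact split k' i'
  -- modulus relations
  have hne : ∀ (x : Fin (n-2)) (p : Fin n), n - 2 ≤ p.val → Fin.castLE hle x ≠ p := by
    intro x p hp hx
    have := congrArg Fin.val hx
    simp [Fin.castLE] at this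
    omega
  set t : ℂ := ((α : ℝ) : ℂ)^2 with ht
  have hmod' : ∀ (x : Fin (n-2)) (p : Fin n), n - 2 ≤ p.val →
      G (Fin.castLE hle x) p * (starRingEnd ℂ) (G (Fin.castLE hle x) p) = t := by
    intro x p hp
    rw [Complex.mul_conj, ← Complex.sq_norm, hmod _ _ (hne x p hp), ht]
    push_cast
    ring
  have ha1 := hmod' i p1 (by simp [hp1])
  have ha2 := hmod' i p2 (by simp [hp2]; omega)
  have hb1 := hmod' j p1 (by simp [hp1])
  have hb2 := hmod' j p2 (by simp [hp2]; omega)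
  have hc1 := hmod' k p1 (by simp [hp1])
  have hc2 := hmod' k p2 (by simp [hp2]; omega)
  rw [← hi'] at ha1 ha2
  rw [← hj'] at hb1 hb2
  rw [← hk'] at hc1 hc2
  -- rewrite casts in the goal
  have habs : ∀ z : ℂ, ((‖z‖ ^ 2 : ℝ) : ℂ) = z * (starRingEnd ℂ) z := fun z => by
    rw [Complex.sq_norm, Complex.mul_conj]
  have e1 : (((‖S‖ ^ 2 + ‖Δ‖ ^ 2 + ‖Ψ‖ ^ 2
      - 4 * α ^ 4 : ℝ)) : ℂ)
      = S * (starRingEnd ℂ) S + Δ * (starRingEnd ℂ) Δ + Ψ * (starRingEnd ℂ) Ψ - 4 * t^2 := by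
    rw [Complex.ofReal_sub, Complex.ofReal_add, Complex.ofReal_add, habs S, habs Δ, habs Ψ, ht]
    push_cast
    ring
  have e2 : ((α ^ 2 : ℝ) : ℂ) = t := by rw [ht]; push_cast; ring
  rw [e1, e2, hS2, hΔ2, hΨ2]
  simp only [map_add, map_mul, Complex.conj_conj]
  set a1 := G i' p1; set a2 := G i' p2
  set b1 := G j' p1; set b2 := G j' p2
  set c1 := G k' p1; set c2 := G k' p2
  linear_combination
    ((b1*(starRingEnd ℂ) b1*c1*(starRingEnd ℂ) c1 + b2*(starRingEnd ℂ) b1*c1*(starRingEnd ℂ) c2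
      - b1*(starRingEnd ℂ) b1*t - c1*(starRingEnd ℂ) c1*t) * ha1)
    + ((b1*(starRingEnd ℂ) b2*c2*(starRingEnd ℂ) c1 + b2*(starRingEnd ℂ) b2*c2*(starRingEnd ℂ) c2
      - b2*(starRingEnd ℂ) b2*t - c2*(starRingEnd ℂ) c2*t) * ha2)
    + ((a1*(starRingEnd ℂ) a2*c2*(starRingEnd ℂ) c1 - t^2) * hb1)
    + ((a2*(starRingEnd ℂ) a1*c1*(starRingEnd ℂ) c2 - t^2) * hb2)
    + ((a2*(starRingEnd ℂ) a1*b1*(starRingEnd ℂ) b2 - t^2) * hc1)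
    + ((a1*(starRingEnd ℂ) a2*b2*(starRingEnd ℂ) b1 - t^2) * hc2)
end

section
/- There is no 3×3 complex self-adjoint matrix H with unit diagonal and off-diagonal entries of modulus α = 1/√6 such that H can be extended to a 5×5 complex self-adjoint matrix G with unit diagonal, all off-diagonal entries of modulus 1/√6, satisfying 3·G² = 5·G. Equivalently, there exists no complex equiangular (5,3)-tight frame. -/
open Matrix Complex Finset

theorem no_equiangular_5_3_frame :
    ¬ ∃ G : Matrix (Fin 5) (Fin 5) ℂ,
      G.IsHermitian
      ∧ (∀ i, G i i = 1)
      ∧ (∀ i j, i ≠ j → ‖G i j‖ = Real.sqrt (1 / 6))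
      ∧ (3 : ℂ) • (G * G) = (5 : ℂ) • G := by
  classical
  rintro ⟨G, hH, hdiag, hoff, heq⟩
  -- G * G = (5/3) • G
  have hGG : G * G = (5/3 : ℂ) • G := by
    apply smul_right_injective (Matrix (Fin 5) (Fin 5) ℂ) (by norm_num : (3:ℂ) ≠ 0)
    show (3:ℂ) • (G * G) = (3:ℂ) • ((5/3 : ℂ) • G)
    rw [heq, smul_smul]
    norm_num
  -- the complementary projection M
  set M : Matrix (Fin 5) (Fin 5) ℂ := 1 - (3/5 : ℂ) • G with hMdef
  have hM2 : M * M = M := by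
    rw [hMdef, sub_mul, one_mul, mul_sub, mul_one, Matrix.smul_mul, Matrix.mul_smul,
      smul_smul, hGG, smul_smul]
    module
  have hMH : M.IsHermitian := by
    have : star (3/5 : ℂ) = (3/5 : ℂ) := by simp
    rw [Matrix.IsHermitian, hMdef, conjTranspose_sub, conjTranspose_smul, conjTranspose_one,
      hH.eq, this]
  have htrM : Matrix.trace M = 2 := by
    have htrG : Matrix.trace G = 5 := by
      simp [Matrix.trace, Matrix.diag, hdiag, Fin.sum_univ_five]
    rw [hMdef, Matrix.trace_sub, Matrix.trace_smul, Matrix.trace_one, htrG]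
    norm_num
  -- spectral data
  set ev : Fin 5 → ℝ := hMH.eigenvalues with hev
  set U : Matrix (Fin 5) (Fin 5) ℂ := (hMH.eigenvectorUnitary : Matrix (Fin 5) (Fin 5) ℂ)
    with hU
  set D : Matrix (Fin 5) (Fin 5) ℂ := Matrix.diagonal (RCLike.ofReal ∘ ev) with hD
  have hU1 : U * star U = 1 := Matrix.mem_unitaryGroup_iff.mp (hMH.eigenvectorUnitary).2
  have hU2 : star U * U = 1 := Matrix.mem_unitaryGroup_iff'.mp (hMH.eigenvectorUnitary).2
  have hspec : M = U * D * star U := hMH.spectral_theorem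
  have hdiagM : star U * M * U = D := by
    have := hMH.conjStarAlgAut_star_eigenvectorUnitary
    simp only [Unitary.conjStarAlgAut_apply, Unitary.coe_star, star_star] at this
    exact this
  -- eigenvalues are 0 or 1
  have hDD : D * D = D := by
    conv_lhs => rw [← hdiagM]
    calc (star U * M * U) * (star U * M * U)
        = star U * (M * ((U * star U) * (M * U))) := by simp only [mul_assoc]
      _ = star U * (M * (M * U)) := by rw [hU1, one_mul]
      _ = star U * (M * M) * U := by simp only [mul_assoc]
      _ = D := by rw [hM2, hdiagM]
  have hev01 : ∀ k, ev k = 0 ∨ ev k = 1 := by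
    intro k
    have h := congrFun (congrFun hDD k) k
    rw [hD, Matrix.diagonal_mul_diagonal, Matrix.diagonal_apply_eq, Matrix.diagonal_apply_eq]
      at h
    simp only [Function.comp_apply, Pi.mul_apply] at h
    have h2 : ev k * ev k = ev k := by exact_mod_cast h
    have h3 : ev k * (ev k - 1) = 0 := by rw [mul_sub, mul_one, h2, sub_self]
    rcases mul_eq_zero.mp h3 with h4 | h4
    · exact Or.inl h4
    · exact Or.inr (by linarith)
  -- sum of eigenvalues is 2
  have hsum : ∑ k, ev k = 2 := by
    have htrD : Matrix.trace D = Matrix.trace M := by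
      conv_rhs => rw [hspec]
      rw [Matrix.trace_mul_cycle, hU2, one_mul]
    rw [htrM, hD, Matrix.trace_diagonal] at htrD
    have : ((∑ k, ev k : ℝ) : ℂ) = ((2:ℝ) : ℂ) := by
      push_cast
      simpa using htrD
    exact_mod_cast this
  -- the eigenvalue-one index set has exactly two elements
  set S : Finset (Fin 5) := Finset.univ.filter (fun k => ev k = 1) with hS
  have hScard : S.card = 2 := by
    have h1 : ∀ k, ev k = if k ∈ S then (1:ℝ) else 0 := by
      intro k
      by_cases hk : k ∈ S
      · simp only [hk, if_true]
        exact (Finset.mem_filter.mp hk).2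
      · simp only [hk, if_false]
        rcases hev01 k with h | h
        · exact h
        · exact absurd (Finset.mem_filter.mpr ⟨Finset.mem_univ k, h⟩) hk
    have h2 : ∑ k, ev k = (S.card : ℝ) := by
      rw [Finset.sum_congr rfl (fun k _ => h1 k)]
      rw [Finset.sum_ite_mem, Finset.univ_inter, Finset.sum_const, nsmul_eq_mul, mul_one]
    rw [hsum] at h2
    exact_mod_cast h2.symm
  -- entries of M via the sub-unitary
  have hMentry : ∀ i j, M i j = ∑ k ∈ S, U i k * star (U j k) := by
    intro i j
    have h := congrFun (congrFun hspec i) j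
    rw [h]
    have expand : (U * D * star U) i j
        = ∑ k, U i k * (RCLike.ofReal (ev k) : ℂ) * star (U j k) := by
      rw [Matrix.mul_apply]
      refine Finset.sum_congr rfl (fun k _ => ?_)
      rw [hD, Matrix.mul_diagonal, Matrix.star_apply]
      rfl
    rw [expand]
    rw [← Finset.sum_subset (Finset.subset_univ S)]
    · refine Finset.sum_congr rfl (fun k hk => ?_)
      have : ev k = 1 := (Finset.mem_filter.mp hk).2
      simp [this]
    · intro k _ hk
      have : ev k = 0 := by
        rcases hev01 k with h0 | h0
        · exact h0
        · exact absurd (Finset.mem_filter.mpr ⟨Finset.mem_univ k, h0⟩) hk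
      simp [this]
  -- the Hadamard-squared matrix and its factorization
  set Jm : Matrix (Fin 5) (Fin 5) ℂ := Matrix.of (fun _ _ => 1) with hJm
  set Qm : Matrix (Fin 5) (Fin 5) ℂ := (1/10 : ℂ) • 1 + (3/50 : ℂ) • Jm with hQm
  have hQentry : ∀ i j, Qm i j = if i = j then (4/25 : ℂ) else 3/50 := by
    intro i j
    by_cases h : i = j
    · subst h
      simp only [hQm, hJm, Matrix.add_apply, Matrix.smul_apply, Matrix.one_apply_eq,
        Matrix.of_apply, smul_eq_mul, if_pos rfl]
      norm_num
    · simp only [hQm, hJm, Matrix.add_apply, Matrix.smul_apply, Matrix.one_apply_ne h,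
        Matrix.of_apply, smul_eq_mul, if_neg h]
      norm_num
  set A' : Matrix (Fin 5) (↥S × ↥S) ℂ :=
    Matrix.of (fun i p => U i p.1 * star (U i p.2)) with hA'
  set B' : Matrix (↥S × ↥S) (Fin 5) ℂ :=
    Matrix.of (fun p j => star (U j p.1) * U j p.2) with hB'
  have hprod : ∀ i j, (A' * B') i j = M i j * star (M i j) := by
    intro i j
    rw [Matrix.mul_apply, Fintype.sum_prod_type]
    have step : (∑ k : ↥S, ∑ l : ↥S, A' i (k, l) * B' (k, l) j)
        = (∑ k : ↥S, U i k * star (U j k)) * (∑ l : ↥S, star (U i l) * U j l) := by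
      rw [Finset.sum_mul_sum]
      refine Finset.sum_congr rfl (fun k _ => Finset.sum_congr rfl (fun l _ => ?_))
      simp only [hA', hB', Matrix.of_apply]
      ring
    rw [step]
    have hM1 : (∑ k : ↥S, U i k * star (U j k)) = M i j := by
      rw [hMentry i j]
      exact Finset.sum_coe_sort S (fun k => U i k * star (U j k))
    have hM2' : (∑ l : ↥S, star (U i l) * U j l) = star (M i j) := by
      rw [hMentry i j, star_sum,
        ← Finset.sum_coe_sort S (fun k => star (U i k * star (U j k)))]
      exact Finset.sum_congr rfl fun l _ => by rw [star_mul', star_star, mul_comm]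
    rw [hM1, hM2']
  have hQfact : Qm = A' * B' := by
    ext i j
    rw [hprod i j, hQentry i j]
    by_cases hij : i = j
    · subst hij
      have hMii : M i i = 2/5 := by
        rw [hMdef]
        simp only [Matrix.sub_apply, Matrix.one_apply_eq, Matrix.smul_apply, hdiag i,
          smul_eq_mul, mul_one]
        norm_num
      rw [hMii, if_pos rfl]
      rw [show star ((2:ℂ)/5) = (2:ℂ)/5 by simp]
      norm_num
    · have hMij : M i j = -(3/5) * G i j := by
        rw [hMdef]
        simp only [Matrix.sub_apply, Matrix.one_apply_ne hij, Matrix.smul_apply, smul_eq_mul]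
        ring
      have habs : G i j * star (G i j) = (1/6 : ℂ) := by
        have h1 : (G i j) * (starRingEnd ℂ) (G i j) = (Complex.normSq (G i j) : ℂ) :=
          Complex.mul_conj _
        have h2 : Complex.normSq (G i j) = (‖G i j‖)^2 :=
          Complex.normSq_eq_norm_sq _
        have h3 : (‖G i j‖)^2 = 1/6 := by
          rw [hoff i j hij, Real.sq_sqrt (by norm_num : (1:ℝ)/6 ≥ 0)]
        rw [show star (G i j) = (starRingEnd ℂ) (G i j) from rfl, h1, h2, h3]
        norm_num
      rw [hMij, if_neg hij]
      have hstep : (-(3/5:ℂ) * G i j) * star (-(3/5:ℂ) * G i j)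
          = (9/25 : ℂ) * (G i j * star (G i j)) := by
        rw [star_mul', show star (-(3/5:ℂ)) = -(3/5:ℂ) by simp]
        ring
      rw [hstep, habs]
      norm_num
  -- rank bound from factorization
  have hrank4 : Qm.rank ≤ 4 := by
    rw [hQfact]
    refine (Matrix.rank_mul_le_left A' B').trans ?_
    refine (Matrix.rank_le_card_width A').trans ?_
    rw [Fintype.card_prod, Fintype.card_coe, hScard]
  -- Qm is invertible
  set Rm : Matrix (Fin 5) (Fin 5) ℂ := (10 : ℂ) • 1 + (-3/2 : ℂ) • Jm with hRm
  have hJJ : Jm * Jm = (5 : ℂ) • Jm := by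
    ext i j
    rw [Matrix.mul_apply]
    simp [hJm, Finset.sum_const]
  have hmul : Qm * Rm = 1 := by
    rw [hQm, hRm]
    simp only [add_mul, mul_add, smul_mul_assoc, mul_smul_comm, smul_smul, one_mul, mul_one,
      hJJ]
    module
  have hunit : IsUnit Qm := ⟨⟨Qm, Rm, hmul, mul_eq_one_comm.mp hmul⟩, rfl⟩
  have hrank5 : Qm.rank = 5 := by
    rw [Matrix.rank_of_isUnit Qm hunit, Fintype.card_fin]
  omega
end

section
/- There exists no complex equiangular (5,2)-tight frame; that is, there is no 5×5 complex self-adjoint matrix G with unit diagonal, all off-diagonal entries of modulus √(3/8), satisfying 2·G² = 5·G. -/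
open Matrix Complex Finset

theorem no_equiangular_5_2_frame :
    ¬ ∃ G : Matrix (Fin 5) (Fin 5) ℂ,
      G.IsHermitian
      ∧ (∀ i, G i i = 1)
      ∧ (∀ i j, i ≠ j → ‖G i j‖ = Real.sqrt (3 / 8))
      ∧ (2 : ℂ) • (G * G) = (5 : ℂ) • G := by
  rintro ⟨G, hH, hdiag, hoff, heq⟩
  classical
  set U : Matrix (Fin 5) (Fin 5) ℂ := (hH.eigenvectorUnitary : Matrix (Fin 5) (Fin 5) ℂ) with hUdef
  set lam : Fin 5 → ℝ := hH.eigenvalues with hlamdef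
  set D : Matrix (Fin 5) (Fin 5) ℂ := Matrix.diagonal (RCLike.ofReal ∘ lam) with hDdef
  have hU1 : U * star U = 1 := (Matrix.mem_unitaryGroup_iff).mp hH.eigenvectorUnitary.2
  have hU2 : star U * U = 1 := (Matrix.mem_unitaryGroup_iff').mp hH.eigenvectorUnitary.2
  have hD : star U * G * U = D := by
    have h := hH.conjStarAlgAut_star_eigenvectorUnitary
    simp only [Unitary.conjStarAlgAut_apply, Unitary.coe_star, star_star] at h
    exact h
  have hG : G = U * D * star U := by
    have h := hH.spectral_theorem
    simp only [Unitary.conjStarAlgAut_apply] at h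
    exact h
  -- eigenvalue dichotomy
  have hDD : D * D = star U * (G * G) * U := by
    calc D * D = (star U * G * U) * (star U * G * U) := by rw [hD]
      _ = star U * (G * (U * star U) * G) * U := by simp only [Matrix.mul_assoc]
      _ = star U * (G * G) * U := by rw [hU1, Matrix.mul_one]
  have h2 : (2 : ℂ) • (D * D) = (5 : ℂ) • D := by
    calc (2:ℂ) • (D * D) = star U * ((2:ℂ) • (G * G)) * U := by
          rw [hDD, Matrix.mul_smul, Matrix.smul_mul]
      _ = star U * ((5:ℂ) • G) * U := by rw [heq]
      _ = (5:ℂ) • D := by rw [← hD, Matrix.mul_smul, Matrix.smul_mul]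
  have hdich : ∀ k, lam k = 0 ∨ lam k = 5 / 2 := by
    intro k
    have hk := congrFun (congrFun h2 k) k
    simp only [Matrix.smul_apply, hDdef, Matrix.diagonal_mul_diagonal,
      Matrix.diagonal_apply_eq, Function.comp_apply, smul_eq_mul] at hk
    have hk' : (2:ℝ) * (lam k * lam k) = 5 * lam k := by
      have hk2 : ((2 * (lam k * lam k) : ℝ) : ℂ) = ((5 * lam k : ℝ) : ℂ) := by
        push_cast
        convert hk using 2 <;> rfl
      exact_mod_cast hk2
    have h5 : (2 * lam k - 5) * lam k = 0 := by linear_combination hk'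
    rcases mul_eq_zero.mp h5 with h | h
    · right; linarith
    · exact Or.inl h
  -- trace
  have htr : ∑ k, lam k = 5 := by
    have t1 : G.trace = (5 : ℂ) := by
      simp [Matrix.trace, Matrix.diag, hdiag]
    have t2 : G.trace = D.trace := by
      rw [hG, Matrix.trace_mul_cycle, hU2, Matrix.one_mul]
    have t3 : D.trace = ((∑ k, lam k : ℝ) : ℂ) := by
      simp [hDdef, Matrix.trace_diagonal]
    rw [t2, t3] at t1
    exact_mod_cast t1
  set s : Finset (Fin 5) := Finset.univ.filter (fun k => lam k ≠ 0) with hsdef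
  have hmem : ∀ k ∈ s, lam k = 5 / 2 := by
    intro k hk
    rcases hdich k with h | h
    · exact absurd h (by simpa [hsdef] using hk)
    · exact h
  have hscard : s.card = 2 := by
    have h1 : ∑ k ∈ s, lam k = 5 := by
      rw [← htr]
      apply Finset.sum_subset (Finset.subset_univ s)
      intro k _ hk
      by_contra h
      exact hk (by simp [hsdef, h])
    have h2 : ∑ k ∈ s, lam k = s.card * (5 / 2) := by
      rw [Finset.sum_congr rfl hmem, Finset.sum_const, nsmul_eq_mul]
    have : (s.card : ℝ) = 2 := by rw [h2] at h1; linarith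
    exact_mod_cast this
  -- entry formula
  set g : Fin 5 → Fin 5 → ℂ := fun i j => ∑ k : s, U i k * (starRingEnd ℂ) (U j k) with hgdef
  have hentry : ∀ i j, G i j = (5 / 2 : ℂ) * g i j := by
    intro i j
    have e1 : G i j = ∑ k, U i k * ((lam k : ℝ) : ℂ) * (starRingEnd ℂ) (U j k) := by
      rw [hG]
      rw [Matrix.mul_apply]
      congr 1; ext k
      rw [Matrix.mul_diagonal]
      simp [Matrix.star_apply, mul_comm, mul_assoc, mul_left_comm]
    have e2 : G i j = ∑ k ∈ s, U i k * ((lam k : ℝ) : ℂ) * (starRingEnd ℂ) (U j k) := by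
      rw [e1]
      symm
      apply Finset.sum_subset (Finset.subset_univ s)
      intro k _ hk
      have : lam k = 0 := by by_contra h; exact hk (by simp [hsdef, h])
      simp [this]
    rw [e2, hgdef]
    rw [← Finset.sum_coe_sort s (fun k => U i k * ((lam k : ℝ) : ℂ) * (starRingEnd ℂ) (U j k))]
    rw [Finset.mul_sum]
    congr 1; ext k
    rw [hmem k k.2]
    push_cast
    ring
  -- off-diagonal modulus squared
  have hmod : ∀ i j, i ≠ j → G i j * (starRingEnd ℂ) (G i j) = ((3 : ℂ)/8) := by
    intro i j hij
    rw [Complex.mul_conj]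
    have h2 : Complex.normSq (G i j) = 3/8 := by
      have h := hoff i j hij
      have h3 : ‖G i j‖ ^ 2 = Real.sqrt (3/8) ^ 2 := by rw [h]
      rw [Real.sq_sqrt (by norm_num), Complex.sq_norm] at h3
      rw [h3]
    rw [h2]
    norm_num
  have hql : ∀ w : ℂ, (starRingEnd ℂ) w * w = (Complex.normSq w : ℂ) := fun w => by
    rw [mul_comm, Complex.mul_conj]
  have hgval : ∀ i j, g i j * (starRingEnd ℂ) (g i j)
      = (3/50 : ℂ) + (if i = j then (1/10 : ℂ) else 0) := by
    intro i j
    have h1 : g i j = (2/5 : ℂ) * G i j := by rw [hentry i j]; ring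
    have hc25 : (starRingEnd ℂ) ((2:ℂ)/5) = (2:ℂ)/5 := by
      rw [show ((2:ℂ)/5) = ((2/5 : ℝ) : ℂ) by norm_num, Complex.conj_ofReal]
    rw [h1, _root_.map_mul, hc25]
    rcases eq_or_ne i j with rfl | hij
    · rw [hdiag i]
      simp only [if_pos rfl, _root_.map_one]
      norm_num
    · rw [if_neg hij]
      calc (2/5:ℂ) * G i j * ((2:ℂ)/5 * (starRingEnd ℂ) (G i j))
          = (2/5) * (2/5) * (G i j * (starRingEnd ℂ) (G i j)) := by ring
        _ = (3/50 : ℂ) + 0 := by rw [hmod i j hij]; norm_num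
  -- the 5 rank-one tensors live in a 4-dimensional space
  set z : Fin 5 → (↥s × ↥s → ℂ) := fun i p => (starRingEnd ℂ) (U i p.1) * U i p.2 with hzdef
  have hnli : ¬ LinearIndependent ℂ z := by
    intro h
    have hle := h.fintype_card_le_finrank
    rw [Module.finrank_pi, Fintype.card_prod, Fintype.card_coe, hscard,
      Fintype.card_fin] at hle
    norm_num at hle
  obtain ⟨c, hc0, i₀, hi₀⟩ := Fintype.not_linearIndependent_iff.mp hnli
  have hzero : ∀ p, ∑ i, c i * z i p = 0 := by
    intro p
    have h := congrFun hc0 p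
    simpa [Finset.sum_apply] using h
  have hT : ∀ i j, (∑ p : ↥s × ↥s, (starRingEnd ℂ) (z i p) * z j p)
      = g i j * (starRingEnd ℂ) (g i j) := by
    intro i j
    have hconjg : (starRingEnd ℂ) (g i j) = ∑ l : s, (starRingEnd ℂ) (U i l) * U j l := by
      rw [hgdef, map_sum]
      refine Finset.sum_congr rfl fun l _ => ?_
      rw [_root_.map_mul, Complex.conj_conj]
    calc (∑ p : ↥s × ↥s, (starRingEnd ℂ) (z i p) * z j p)
        = ∑ k : ↥s, ∑ l : ↥s,
            (U i k * (starRingEnd ℂ) (U j k)) * ((starRingEnd ℂ) (U i l) * U j l) := by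
          rw [Fintype.sum_prod_type]
          refine Finset.sum_congr rfl fun k _ => Finset.sum_congr rfl fun l _ => ?_
          simp only [hzdef, _root_.map_mul, Complex.conj_conj]
          ring
      _ = (∑ k : ↥s, U i k * (starRingEnd ℂ) (U j k))
            * (∑ l : ↥s, (starRingEnd ℂ) (U i l) * U j l) := by
          rw [Finset.sum_mul_sum]
      _ = g i j * (starRingEnd ℂ) (g i j) := by rw [hgdef, hconjg]
  -- overall contradiction
  have key : (0:ℂ) = ∑ i, ∑ j, (starRingEnd ℂ) (c i) * c j
      * (g i j * (starRingEnd ℂ) (g i j)) := by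
    have e1 : (0:ℂ) = ∑ p : ↥s × ↥s,
        (starRingEnd ℂ) (∑ i, c i * z i p) * (∑ j, c j * z j p) := by
      simp [hzero]
    rw [e1]
    calc ∑ p : ↥s × ↥s, (starRingEnd ℂ) (∑ i, c i * z i p) * (∑ j, c j * z j p)
        = ∑ p : ↥s × ↥s, ∑ i, ∑ j,
            ((starRingEnd ℂ) (c i) * c j) * ((starRingEnd ℂ) (z i p) * z j p) := by
          refine Finset.sum_congr rfl fun p _ => ?_
          rw [map_sum, Finset.sum_mul_sum]
          refine Finset.sum_congr rfl fun i _ => Finset.sum_congr rfl fun j _ => ?_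
          rw [_root_.map_mul]
          ring
      _ = ∑ i, ∑ j, ∑ p : ↥s × ↥s,
            ((starRingEnd ℂ) (c i) * c j) * ((starRingEnd ℂ) (z i p) * z j p) := by
          rw [Finset.sum_comm]
          refine Finset.sum_congr rfl fun i _ => ?_
          rw [Finset.sum_comm]
      _ = ∑ i, ∑ j, (starRingEnd ℂ) (c i) * c j * (g i j * (starRingEnd ℂ) (g i j)) := by
          refine Finset.sum_congr rfl fun i _ => Finset.sum_congr rfl fun j _ => ?_
          rw [← Finset.mul_sum, hT]
  rw [Finset.sum_congr rfl (fun i _ => Finset.sum_congr rfl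
    (fun j _ => by rw [hgval i j]))] at key
  have inner : ∀ i ∈ (Finset.univ : Finset (Fin 5)),
      (∑ j, (starRingEnd ℂ) (c i) * c j * ((3/50:ℂ) + if i = j then (1/10:ℂ) else 0))
      = (3/50:ℂ) * ((starRingEnd ℂ) (c i) * ∑ j, c j)
        + (1/10:ℂ) * ((Complex.normSq (c i) : ℝ) : ℂ) := by
    intro i _
    calc (∑ j, (starRingEnd ℂ) (c i) * c j * ((3/50:ℂ) + if i = j then (1/10:ℂ) else 0))
        = ∑ j, ((3/50:ℂ) * ((starRingEnd ℂ) (c i) * c j)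
            + if j = i then (1/10:ℂ) * ((starRingEnd ℂ) (c i) * c i) else 0) := by
          refine Finset.sum_congr rfl fun j _ => ?_
          rcases eq_or_ne i j with rfl | hij
          · rw [if_pos rfl, if_pos rfl]; ring
          · rw [if_neg hij, if_neg (Ne.symm hij)]; ring
      _ = (3/50:ℂ) * ((starRingEnd ℂ) (c i) * ∑ j, c j)
            + (1/10:ℂ) * ((Complex.normSq (c i) : ℝ) : ℂ) := by
          rw [Finset.sum_add_distrib, Finset.sum_ite_eq' Finset.univ i]
          rw [← Finset.mul_sum, ← Finset.mul_sum, hql]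
          simp
  rw [Finset.sum_congr rfl inner, Finset.sum_add_distrib, ← Finset.mul_sum,
    ← Finset.mul_sum, ← Finset.sum_mul, ← map_sum, hql] at key
  have key2 : (0:ℝ) = 3/50 * Complex.normSq (∑ i, c i)
      + 1/10 * ∑ i, Complex.normSq (c i) := by
    rw [show ((3:ℂ)/50) = ((3/50 : ℝ) : ℂ) by norm_num,
      show ((1:ℂ)/10) = ((1/10 : ℝ) : ℂ) by norm_num] at key
    exact_mod_cast key
  have h4 : 0 < Complex.normSq (c i₀) := Complex.normSq_pos.mpr hi₀
  have h5 : Complex.normSq (c i₀) ≤ ∑ i, Complex.normSq (c i) :=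
    Finset.single_le_sum (fun i _ => Complex.normSq_nonneg (c i)) (Finset.mem_univ i₀)
  have h6 : 0 ≤ Complex.normSq (∑ i, c i) := Complex.normSq_nonneg _
  linarith
end

section
/- Let ω = −1/2 + i√3/2 and let a be any complex number with |a| = 1. Define the 9×9 matrix H₉(a) with rows: [1,1,1,1,1,1,1,1,1], [1,1,1,ω,ω,ω,ω²,ω²,ω²], [1,1,1,ω²,ω²,ω²,ω,ω,ω], [1,ω²,ω,1,ω²,ω,a,aω²,aω], [1,ω²,ω,ω,1,ω²,aω²,aω,a], [1,ω²,ω,ω²,ω,1,aω,a,aω²], [1,ω,ω²,ā,āω,āω²,1,ω,ω²], [1,ω,ω²,āω,āω²,ā,ω²,1,ω], [1,ω,ω²,āω²,ā,āω,ω,ω²,1] (where ā = conj(a)). Then H₉(a) is self-adjoint, all its entries have modulus 1, its diagonal is constant 1, and H₉(a)·H₉(a)* = 9·I. -/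
open Matrix in
lemma H9aux_cons_val_five {α : Type*} {m : ℕ} (x : α) (u : Fin (m+5) → α) :
    vecCons x u 5 = vecHead (vecTail (vecTail (vecTail (vecTail u)))) := rfl

open Matrix in
lemma H9aux_cons_val_six {α : Type*} {m : ℕ} (x : α) (u : Fin (m+6) → α) :
    vecCons x u 6 = vecHead (vecTail (vecTail (vecTail (vecTail (vecTail u))))) := rfl

open Matrix in
lemma H9aux_cons_val_seven {α : Type*} {m : ℕ} (x : α) (u : Fin (m+7) → α) :
    vecCons x u 7 = vecHead (vecTail (vecTail (vecTail (vecTail (vecTail (vecTail u)))))) := rfl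

open Matrix in
lemma H9aux_cons_val_eight {α : Type*} {m : ℕ} (x : α) (u : Fin (m+8) → α) :
    vecCons x u 8 = vecHead (vecTail (vecTail (vecTail (vecTail (vecTail (vecTail (vecTail u))))))) := rfl

lemma H9aux_sum_univ_nine {M : Type*} [AddCommMonoid M] (f : Fin 9 → M) :
    ∑ i, f i = f 0 + f 1 + f 2 + f 3 + f 4 + f 5 + f 6 + f 7 + f 8 := by
  rw [Fin.sum_univ_castSucc, Fin.sum_univ_castSucc, Fin.sum_univ_castSucc, Fin.sum_univ_castSucc,
    Fin.sum_univ_castSucc, Fin.sum_univ_castSucc, Fin.sum_univ_castSucc, Fin.sum_univ_castSucc,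
    Fin.sum_univ_one]
  rfl

set_option maxHeartbeats 4000000 in
theorem H9_family_is_hadamard (ω a : ℂ)
    (hω : ω = -1/2 + Complex.I * (Real.sqrt 3 / 2))
    (ha : ‖a‖ = 1) :
    ∀ H : Matrix (Fin 9) (Fin 9) ℂ,
      H = Matrix.of
        ![![1, 1, 1, 1, 1, 1, 1, 1, 1],
          ![1, 1, 1, ω, ω, ω, ω^2, ω^2, ω^2],
          ![1, 1, 1, ω^2, ω^2, ω^2, ω, ω, ω],
          ![1, ω^2, ω, 1, ω^2, ω, a, a*ω^2, a*ω],
          ![1, ω^2, ω, ω, 1, ω^2, a*ω^2, a*ω, a],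
          ![1, ω^2, ω, ω^2, ω, 1, a*ω, a, a*ω^2],
          ![1, ω, ω^2, (starRingEnd ℂ) a, (starRingEnd ℂ) a*ω, (starRingEnd ℂ) a*ω^2, 1, ω, ω^2],
          ![1, ω, ω^2, (starRingEnd ℂ) a*ω, (starRingEnd ℂ) a*ω^2, (starRingEnd ℂ) a, ω^2, 1, ω],
          ![1, ω, ω^2, (starRingEnd ℂ) a*ω^2, (starRingEnd ℂ) a, (starRingEnd ℂ) a*ω, ω, ω^2, 1]] →
      H.IsHermitian
      ∧ (∀ i j, ‖H i j‖ = 1)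
      ∧ (∀ i, H i i = 1)
      ∧ H * H.conjTranspose = (9 : ℂ) • (1 : Matrix (Fin 9) (Fin 9) ℂ) := by
  intro H hH
  have hω2 : ω^2 = -1 - ω := by
    have h3 : ((Real.sqrt 3 : ℝ) : ℂ)^2 = 3 := by
      norm_cast; rw [Real.sq_sqrt]; norm_num
    rw [hω]; linear_combination (Complex.I^2/4) * h3 + (3/4) * Complex.I_sq
  have hcω : (starRingEnd ℂ) ω = ω^2 := by
    rw [hω2, hω]
    simp [map_add, map_mul, map_div₀, Complex.conj_I, Complex.conj_ofReal, map_ofNat]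
    ring
  have ha' : a ≠ 0 := by
    intro h; rw [h] at ha; simp at ha
  have hca : (starRingEnd ℂ) a = a⁻¹ := by
    field_simp
    rw [mul_comm, Complex.mul_conj, Complex.normSq_eq_norm_sq, ha]
    norm_num
  have hω3 : ω^3 = 1 := by linear_combination (ω - 1) * hω2
  have hω4 : ω^4 = ω := by linear_combination ω * hω3
  have hω5 : ω^5 = ω^2 := by linear_combination ω^2 * hω3
  have hω6 : ω^6 = 1 := by linear_combination (ω^3 + 1) * hω3
  have habsω : ‖ω‖ = 1 := by
    have hns : Complex.normSq ω = 1 := by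
      have h := Complex.mul_conj ω
      rw [hcω] at h
      have : ((Complex.normSq ω : ℝ) : ℂ) = 1 := by rw [← h]; linear_combination hω3
      exact_mod_cast this
    rw [Complex.norm_def, hns, Real.sqrt_one]
  have habsa : ‖a⁻¹‖ = 1 := by rw [norm_inv, ha]; norm_num
  subst hH
  refine ⟨?_, ?_, ?_, ?_⟩
  · rw [Matrix.IsHermitian]
    ext i j
    fin_cases i <;> fin_cases j <;>
      · simp (config := { decide := true }) [Matrix.conjTranspose_apply,
          H9aux_cons_val_five, H9aux_cons_val_six, H9aux_cons_val_seven, H9aux_cons_val_eight,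
          Matrix.vecHead, Matrix.vecTail,
          map_mul, map_pow, map_inv₀, hcω, hca, inv_inv]
        try field_simp
        try ring_nf
        try simp only [hω6, hω5, hω4, hω3, hω2]
        try ring_nf
        try tauto
  · intro i j
    fin_cases i <;> fin_cases j <;>
      simp [H9aux_cons_val_five, H9aux_cons_val_six, H9aux_cons_val_seven, H9aux_cons_val_eight,
        Matrix.vecHead, Matrix.vecTail,
        map_mul, map_pow, map_inv₀, Complex.norm_conj, habsω, ha, habsa]
  · intro i
    fin_cases i <;>
      simp [H9aux_cons_val_five, H9aux_cons_val_six, H9aux_cons_val_seven, H9aux_cons_val_eight,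
        Matrix.vecHead, Matrix.vecTail]
  · ext i j
    fin_cases i <;> fin_cases j <;>
      · simp (config := { decide := true }) [Matrix.mul_apply, H9aux_sum_univ_nine,
          Matrix.conjTranspose_apply,
          H9aux_cons_val_five, H9aux_cons_val_six, H9aux_cons_val_seven, H9aux_cons_val_eight,
          Matrix.vecHead, Matrix.vecTail, Matrix.one_apply, Fin.ext_iff,
          map_mul, map_pow, map_inv₀, hcω, hca, inv_inv]
        try field_simp
        try ring_nf
        try simp only [hω6, hω5, hω4, hω3, hω2]
        try ring_nf
        try tauto
end

section
/- Let ω = −1/2 + i√3/2, |a| = 1, and let H₉(a) be the self-adjoint complex Hadamard matrix of order 9 with constant diagonal 1 defined in the family H₉⁽¹⁾ (rows as given explicitly). Then G = (3·I₉ − H₉(a))/2 is a 9×9 self-adjoint matrix with unit diagonal, all off-diagonal entries of modulus 1/2, and satisfies 3·G² = 9·G. In particular, complex equiangular (9,3)-tight frames exist. -/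
set_option maxHeartbeats 4000000 in
theorem equiangular_9_3_from_H9 (ω a : ℂ)
    (hω : ω = -1/2 + Complex.I * (Real.sqrt 3 / 2))
    (ha : ‖a‖ = 1) :
    (∀ H : Matrix (Fin 9) (Fin 9) ℂ,
      H = Matrix.of
        ![![1, 1, 1, 1, 1, 1, 1, 1, 1],
          ![1, 1, 1, ω, ω, ω, ω^2, ω^2, ω^2],
          ![1, 1, 1, ω^2, ω^2, ω^2, ω, ω, ω],
          ![1, ω^2, ω, 1, ω^2, ω, a, a*ω^2, a*ω],
          ![1, ω^2, ω, ω, 1, ω^2, a*ω^2, a*ω, a],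
          ![1, ω^2, ω, ω^2, ω, 1, a*ω, a, a*ω^2],
          ![1, ω, ω^2, (starRingEnd ℂ) a, (starRingEnd ℂ) a*ω, (starRingEnd ℂ) a*ω^2, 1, ω, ω^2],
          ![1, ω, ω^2, (starRingEnd ℂ) a*ω, (starRingEnd ℂ) a*ω^2, (starRingEnd ℂ) a, ω^2, 1, ω],
          ![1, ω, ω^2, (starRingEnd ℂ) a*ω^2, (starRingEnd ℂ) a, (starRingEnd ℂ) a*ω, ω, ω^2, 1]] →
      ∀ G : Matrix (Fin 9) (Fin 9) ℂ,
        G = (2 : ℂ)⁻¹ • ((3 : ℂ) • (1 : Matrix (Fin 9) (Fin 9) ℂ) - H) →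
        G.IsHermitian
        ∧ (∀ i, G i i = 1)
        ∧ (∀ i j, i ≠ j → ‖G i j‖ = 1/2)
        ∧ (3 : ℂ) • (G * G) = (9 : ℂ) • G)
    ∧ ∃ G : Matrix (Fin 9) (Fin 9) ℂ,
        G.IsHermitian
        ∧ (∀ i, G i i = 1)
        ∧ (∀ i j, i ≠ j → ‖G i j‖ = 1/2)
        ∧ (3 : ℂ) • (G * G) = (9 : ℂ) • G := by
  have hsq3 : (Real.sqrt 3 : ℂ)^2 = 3 := by
    norm_cast
    rw [Real.sq_sqrt]; norm_num
  have hsum : 1 + ω + ω^2 = 0 := by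
    rw [hω]; ring_nf
    rw [Complex.I_sq, hsq3]; ring
  have hω2 : ω^2 = -1 - ω := by linear_combination hsum
  have hω3 : ω^3 = 1 := by linear_combination (ω - 1) * hsum
  have hω4 : ω^4 = ω := by linear_combination (ω^2 - ω) * hsum
  have hcω : (starRingEnd ℂ) ω = ω^2 := by
    rw [hω2, hω]
    simp [map_add, map_mul, map_div₀, Complex.conj_I, map_neg, map_one, Complex.conj_ofReal,
      map_ofNat]
    ring
  have hcω2 : (starRingEnd ℂ) (ω^2) = ω := by
    rw [map_pow, hcω]; linear_combination ω * hω3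
  have ha0 : a ≠ 0 := by
    intro h; rw [h] at ha; simp at ha
  have hb : (starRingEnd ℂ) a = a⁻¹ := by
    field_simp
    rw [mul_comm, Complex.mul_conj, Complex.normSq_eq_norm_sq, ha]; norm_num
  have habsω : ‖ω‖ = 1 := by
    have h3 : ‖ω‖ ^ 3 = 1 := by
      rw [← norm_pow, hω3, norm_one]
    nlinarith [norm_nonneg ω, sq_nonneg (‖ω‖ - 1), sq_nonneg (‖ω‖ + 1)]
  have main : ∀ H : Matrix (Fin 9) (Fin 9) ℂ,
      H = Matrix.of
        ![![1, 1, 1, 1, 1, 1, 1, 1, 1],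
          ![1, 1, 1, ω, ω, ω, ω^2, ω^2, ω^2],
          ![1, 1, 1, ω^2, ω^2, ω^2, ω, ω, ω],
          ![1, ω^2, ω, 1, ω^2, ω, a, a*ω^2, a*ω],
          ![1, ω^2, ω, ω, 1, ω^2, a*ω^2, a*ω, a],
          ![1, ω^2, ω, ω^2, ω, 1, a*ω, a, a*ω^2],
          ![1, ω, ω^2, (starRingEnd ℂ) a, (starRingEnd ℂ) a*ω, (starRingEnd ℂ) a*ω^2, 1, ω, ω^2],
          ![1, ω, ω^2, (starRingEnd ℂ) a*ω, (starRingEnd ℂ) a*ω^2, (starRingEnd ℂ) a, ω^2, 1, ω],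
          ![1, ω, ω^2, (starRingEnd ℂ) a*ω^2, (starRingEnd ℂ) a, (starRingEnd ℂ) a*ω, ω, ω^2, 1]] →
      ∀ G : Matrix (Fin 9) (Fin 9) ℂ,
        G = (2 : ℂ)⁻¹ • ((3 : ℂ) • (1 : Matrix (Fin 9) (Fin 9) ℂ) - H) →
        G.IsHermitian
        ∧ (∀ i, G i i = 1)
        ∧ (∀ i j, i ≠ j → ‖G i j‖ = 1/2)
        ∧ (3 : ℂ) • (G * G) = (9 : ℂ) • G := by
    intro H hH G hG
    have key : H * H = (9 : ℂ) • (1 : Matrix (Fin 9) (Fin 9) ℂ) := by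
      rw [hH]
      ext i j
      fin_cases i <;> fin_cases j <;>
      · simp only [Matrix.mul_apply, Fin.sum_univ_succ, Fin.sum_univ_zero, Matrix.of_apply,
          Matrix.cons_val', Matrix.cons_val_zero, Matrix.cons_val_one, Matrix.head_cons,
          Matrix.empty_val', Matrix.cons_val_fin_one, Matrix.cons_val_succ, add_zero, hb,
          Matrix.vecTail, Matrix.vecHead, Function.comp_apply, Fin.succ, Matrix.smul_apply,
          Matrix.one_apply, Fin.mk_zero, Fin.mk_one, smul_eq_mul]
        norm_num [Fin.ext_iff]
        try field_simp
        try ring_nf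
        try simp only [hω4, hω3, hω2]
        try ring
    have hHH : H.conjTranspose = H := by
      rw [hH]
      ext i j
      fin_cases i <;> fin_cases j <;>
      · simp only [Matrix.conjTranspose_apply, Complex.star_def, Matrix.smul_apply,
          Matrix.sub_apply, Matrix.one_apply, Matrix.of_apply,
          Matrix.cons_val_zero, Matrix.cons_val_one, Matrix.head_cons, Matrix.empty_val',
          Matrix.cons_val_fin_one, Matrix.cons_val_succ, Matrix.cons_val', Matrix.vecTail,
          Matrix.vecHead, Function.comp_apply, Fin.succ, Fin.mk_zero, Fin.mk_one, smul_eq_mul,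
          map_mul, map_one, Complex.conj_conj, hcω, hcω2]
        try norm_num [Fin.ext_iff, hcω, hcω2, hω4, hω3, hω2, Complex.conj_conj]
        try ring
    refine ⟨?_, ?_, ?_, ?_⟩
    · rw [hG, Matrix.IsHermitian, Matrix.conjTranspose_smul, Matrix.conjTranspose_sub,
        Matrix.conjTranspose_smul, Matrix.conjTranspose_one, hHH]
      norm_num
    · intro i
      rw [hG, hH]
      fin_cases i <;>
      · simp only [Matrix.smul_apply, Matrix.sub_apply, Matrix.one_apply, Matrix.of_apply,
          Matrix.cons_val_zero, Matrix.cons_val_one, Matrix.head_cons, Matrix.empty_val',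
          Matrix.cons_val_fin_one, Matrix.cons_val_succ, Matrix.cons_val', Matrix.vecTail,
          Matrix.vecHead, Function.comp_apply, Fin.succ, Fin.mk_zero, Fin.mk_one, smul_eq_mul]
        norm_num [Fin.ext_iff]
    · intro i j hne
      rw [hG, hH]
      fin_cases i <;> fin_cases j <;> first
        | (exact absurd rfl hne)
        | (simp only [Matrix.smul_apply, Matrix.sub_apply, Matrix.one_apply, Matrix.of_apply,
            Matrix.cons_val_zero, Matrix.cons_val_one, Matrix.head_cons, Matrix.empty_val',
            Matrix.cons_val_fin_one, Matrix.cons_val_succ, Matrix.cons_val', Matrix.vecTail,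
            Matrix.vecHead, Function.comp_apply, Fin.succ, Fin.mk_zero, Fin.mk_one, smul_eq_mul]
           norm_num [Fin.ext_iff, map_mul, map_pow, Complex.norm_conj, habsω, ha])
    · rw [hG]
      simp only [Matrix.smul_mul, Matrix.mul_smul, Matrix.sub_mul, Matrix.mul_sub,
        Matrix.one_mul, Matrix.mul_one, key]
      match_scalars <;> norm_num
  refine ⟨main, ?_⟩
  obtain ⟨h1, h2, h3, h4⟩ := main _ rfl _ rfl
  exact ⟨_, h1, h2, h3, h4⟩
end

section
/- Let a = −√6/9 + i·(5√3/9). Then |a| = 1, and the 3×3 matrix H = (1/√6)·[[√6, 1, 1], [1, √6, a], [1, 1/a, √6]] is a matrix of rank at most 3 with unit diagonal and off-diagonal entries of modulus 1/√6, which satisfies the analytic bound |(5/3)·h_{i,j} − Σ_{k=1}^{3} h_{i,k}·conj(h_{j,k})| ≤ 2·(1/6) for all 1 ≤ i < j ≤ 3 (with h denoting the entries of H). -/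
lemma abs_le_of_normSq_le' {z : ℂ} {c : ℝ} (hc : 0 ≤ c)
    (h : Complex.normSq z ≤ c ^ 2) : ‖z‖ ≤ c := by
  rw [Complex.norm_def]
  calc Real.sqrt (Complex.normSq z) ≤ Real.sqrt (c ^ 2) := Real.sqrt_le_sqrt h
    _ = c := Real.sqrt_sq hc

set_option maxHeartbeats 1000000 in
theorem analytic_criterion_not_sufficient (a : ℂ)
    (ha : a = -(Real.sqrt 6 / 9) + Complex.I * (5 * Real.sqrt 3 / 9)) :
    ‖a‖ = 1
    ∧ ∀ H : Matrix (Fin 3) (Fin 3) ℂ,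
      H = ((Real.sqrt 6 : ℂ))⁻¹ •
        Matrix.of ![![(Real.sqrt 6 : ℂ), 1, 1],
                    ![1, (Real.sqrt 6 : ℂ), a],
                    ![1, a⁻¹, (Real.sqrt 6 : ℂ)]] →
      H.rank ≤ 3
      ∧ (∀ i, H i i = 1)
      ∧ (∀ i j, i ≠ j → ‖H i j‖ = (Real.sqrt 6)⁻¹)
      ∧ (∀ i j : Fin 3, i < j →
          ‖(5/3 : ℂ) * H i j - ∑ k, H i k * (starRingEnd ℂ) (H j k)‖
            ≤ 2 * (1/6)) := by
  have hs6 : Real.sqrt 6 ^ 2 = 6 := Real.sq_sqrt (by norm_num)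
  have hs3 : Real.sqrt 3 ^ 2 = 3 := Real.sq_sqrt (by norm_num)
  have hs60 : 0 < Real.sqrt 6 := Real.sqrt_pos.mpr (by norm_num)
  have hs30 : 0 < Real.sqrt 3 := Real.sqrt_pos.mpr (by norm_num)
  have h66 : Real.sqrt 6 * Real.sqrt 6 = 6 := Real.mul_self_sqrt (by norm_num)
  have h33 : Real.sqrt 3 * Real.sqrt 3 = 3 := Real.mul_self_sqrt (by norm_num)
  have h663 : Real.sqrt 6 * Real.sqrt 6 * Real.sqrt 3 = 6 * Real.sqrt 3 := by rw [h66]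
  have h336 : Real.sqrt 3 * Real.sqrt 3 * Real.sqrt 6 = 3 * Real.sqrt 6 := by rw [h33]
  have hsne : (Real.sqrt 6 : ℂ) ≠ 0 := Complex.ofReal_ne_zero.mpr hs60.ne'
  have hnorm : Complex.normSq a = 1 := by
    rw [ha]
    simp [Complex.normSq_apply]
    nlinarith [hs6, hs3]
  have habs : ‖a‖ = 1 := by
    rw [Complex.norm_def, hnorm, Real.sqrt_one]
  have hainv : a⁻¹ = (starRingEnd ℂ) a := by
    rw [Complex.inv_def, hnorm]; simp
  have hconj : (starRingEnd ℂ) a = -(Real.sqrt 6 / 9) - Complex.I * (5 * Real.sqrt 3 / 9) := by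
    rw [ha]; simp [Complex.ext_iff, map_ofNat]
  have habsinv : ‖a⁻¹‖ = 1 := by
    rw [norm_inv, habs]; norm_num
  refine ⟨habs, ?_⟩
  intro H hH
  refine ⟨?_, ?_, ?_, ?_⟩
  · exact (Matrix.rank_le_card_height H).trans (by simp)
  · intro i
    fin_cases i <;> simp [hH, inv_mul_cancel₀ hsne]
  · intro i j hij
    subst hH
    fin_cases i <;> fin_cases j <;>
      simp only [Matrix.smul_apply, Matrix.of_apply, Matrix.cons_val', Matrix.cons_val_zero,
        Matrix.cons_val_one, Matrix.head_cons, Matrix.empty_val', Matrix.cons_val_fin_one,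
        Matrix.head_fin_const, Matrix.cons_val_two, Matrix.tail_cons, smul_eq_mul,
        Fin.isValue, Fin.reduceFinMk, Fin.zero_eta, Fin.mk_one] <;>
      first
        | exact absurd rfl hij
        | simp [map_mul, map_inv₀, norm_mul, norm_inv, Complex.norm_real, Real.norm_eq_abs, abs_of_pos hs60, habs, habsinv]
  · intro i j hij
    have key : ∀ z : ℂ, Complex.normSq z ≤ (1/3)^2 → ‖z‖ ≤ 2 * (1/6) := by
      intro z hz
      have := abs_le_of_normSq_le' (by norm_num : (0:ℝ) ≤ 1/3) hz
      linarith
    fin_cases i <;> fin_cases j <;> simp only [Fin.mk_lt_mk] at hij <;>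
      first
      | omega
      | (apply key
         subst hH
         simp only [Fin.sum_univ_three, Matrix.smul_apply, Matrix.of_apply, Matrix.cons_val',
           Matrix.cons_val_zero, Matrix.cons_val_one, Matrix.head_cons, Matrix.empty_val',
           Matrix.cons_val_fin_one, Matrix.head_fin_const, Matrix.cons_val_two, Matrix.tail_cons,
           smul_eq_mul, Fin.isValue, Fin.reduceFinMk, Fin.zero_eta, Fin.mk_one]
         simp only [hainv, map_mul, map_inv₀, map_add, map_neg, map_sub, Complex.conj_ofReal,
           Complex.conj_I, map_ofNat, map_one, map_div₀]
         simp only [hconj, ha]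
         simp [Complex.normSq_apply, Complex.div_re, Complex.div_im]
         field_simp
         nlinarith [h66, h33, h663, h336, hs60, hs30])
end
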